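/- arXiv:2502.00254 — 3 statements merged into one kernel-verified Lean document; each statement's English description precedes it below -/
import Mathlib

section
/- Let n ≥ 1 and let p, q be monic complex polynomials of degree n all of whose roots lie on the unit circle T = {z ∈ ℂ : |z| = 1}. Then the finite free multiplicative convolution p ⊠_n q also has all of its roots on T. -/
open Polynomial Finset

noncomputable section
namespace FFPAux


/-- elementary symmetric function of a list -/
def eL : List ℂ → ℕ → ℂ
  | _, 0 => 1
  | [], _+1 => 0
  | (a::t), (k+1) => eL t (k+1) + a * eL t k

@[simp] lemma eL_zero (l : List ℂ) : eL l 0 = 1 := by cases l <;> rfl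

@[simp] lemma eL_nil_succ (k : ℕ) : eL [] (k+1) = 0 := rfl

lemma eL_cons (a : ℂ) (t : List ℂ) (k : ℕ) :
    eL (a::t) (k+1) = eL t (k+1) + a * eL t k := rfl

lemma eL_eq_zero {l : List ℂ} {k : ℕ} (h : l.length < k) : eL l k = 0 := by
  induction l generalizing k with
  | nil => cases k with
    | zero => simp at h
    | succ k => simp
  | cons a t ih =>
      cases k with
      | zero => simp at h
      | succ k =>
          rw [eL_cons, ih (by simp at h; omega), ih (by simp at h; omega)]
          ring


/-- product of (X - β) over a list -/
def PL (l : List ℂ) : Polynomial ℂ := (l.map (fun b => X - C b)).prod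

@[simp] lemma PL_nil : PL [] = 1 := rfl

lemma PL_cons (a : ℂ) (t : List ℂ) : PL (a::t) = (X - C a) * PL t := by
  simp [PL]

lemma PL_monic (l : List ℂ) : (PL l).Monic := by
  induction l with
  | nil => simpa [PL] using monic_one
  | cons a t ih => rw [PL_cons]; exact (monic_X_sub_C a).mul ih

lemma PL_natDegree (l : List ℂ) : (PL l).natDegree = l.length := by
  induction l with
  | nil => simp [PL]
  | cons a t ih =>
      rw [PL_cons, (monic_X_sub_C a).natDegree_mul (PL_monic t), natDegree_X_sub_C, ih, List.length_cons]
      omega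

lemma PL_coeff (l : List ℂ) : ∀ i j : ℕ, i + j = l.length →
    (PL l).coeff i = (-1)^j * eL l j := by
  induction l with
  | nil => intro i j h; simp at h; simp [h.1, h.2, PL]
  | cons a t ih =>
      intro i j h
      have h' : i + j = t.length + 1 := by simpa using h
      rw [PL_cons, sub_mul, coeff_sub, coeff_C_mul]
      cases i with
      | zero =>
          have hj : j = t.length + 1 := by omega
          subst hj
          rw [coeff_X_mul_zero, ih 0 t.length (by simp), eL_cons,
            eL_eq_zero (Nat.lt_succ_self _)]
          ring
      | succ i =>
          rw [coeff_X_mul, ih i (j) (by omega)]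
          cases j with
          | zero =>
              have : t.length < i + 1 := by omega
              rw [coeff_eq_zero_of_natDegree_lt (by rw [PL_natDegree]; omega)]
              simp
          | succ j =>
              rw [ih (i+1) j (by omega), eL_cons]
              ring


lemma eL_div (z : ℂ) : ∀ (b : List ℂ), (∀ β ∈ b, β ≠ 0) → ∀ i j : ℕ, i + j = b.length →
    eL (b.map (fun β => z/β)) j * eL b b.length = z^j * eL b i := by
  intro b
  induction b with
  | nil => intro _ i j h; simp at h; simp [h.1, h.2]
  | cons a t ih =>
      intro hnz i j h
      have ha : a ≠ 0 := hnz a (List.mem_cons_self)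
      have ht : ∀ β ∈ t, β ≠ 0 := fun β hb => hnz β (List.mem_cons_of_mem a hb)
      have h' : i + j = t.length + 1 := by simpa using h
      have hlen : eL (a::t) (t.length+1) = a * eL t t.length := by
        rw [eL_cons, eL_eq_zero (Nat.lt_succ_self _), zero_add]
      cases j with
      | zero => simp [show i = t.length + 1 by omega]
      | succ j =>
          simp only [List.map_cons, List.length_cons, eL_cons]
          rw [eL_eq_zero (Nat.lt_succ_self t.length), zero_add]
          have e1 : (z/a) * eL (t.map (fun β => z/β)) j * (a * eL t t.length)
              = z * (eL (t.map (fun β => z/β)) j * eL t t.length) := by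
            field_simp
          rw [add_mul, e1]
          cases i with
          | zero =>
              have hj : j = t.length := by omega
              subst hj
              rw [eL_eq_zero (show (t.map (fun β => z/β)).length < t.length + 1 by simp),
                ih ht 0 t.length (by simp)]
              simp [pow_succ]; ring
          | succ i =>
              rw [ih ht (i+1) j (by omega),
                show eL (t.map (fun β => z/β)) (j+1) * (a * eL t t.length)
                  = a * (eL (t.map (fun β => z/β)) (j+1) * eL t t.length) by ring,
                ih ht i (j+1) (by omega), eL_cons]
              ring


/-- polar derivative operator with formal degree N and pole w -/
def Dop (N : ℕ) (w : ℂ) (p : Polynomial ℂ) : Polynomial ℂ :=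
  C (N:ℂ) * p + (C w - X) * derivative p

lemma coeff_Dop (N : ℕ) (w : ℂ) (p : Polynomial ℂ) (j : ℕ) :
    (Dop N w p).coeff j = ((N:ℂ) - j) * p.coeff j + (j+1) * w * p.coeff (j+1) := by
  rcases j with _ | j
  · simp [Dop, coeff_derivative, mul_comm]
  · simp [Dop, sub_mul, coeff_derivative, coeff_X_mul, mul_comm, mul_assoc, mul_left_comm]
    ring

lemma Dop_natDegree_le (N : ℕ) (w : ℂ) (p : Polynomial ℂ) (hp : p.natDegree ≤ N) :
    (Dop N w p).natDegree ≤ N - 1 := by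
  rw [natDegree_le_iff_coeff_eq_zero]
  intro m hm
  have h1 : N ≤ m := by omega
  rw [coeff_Dop]
  rcases eq_or_lt_of_le h1 with h | h
  · subst h
    have h2 : p.coeff (N+1) = 0 := coeff_eq_zero_of_natDegree_lt (by omega)
    rw [h2]
    simp
  · rw [coeff_eq_zero_of_natDegree_lt (by omega), coeff_eq_zero_of_natDegree_lt (by omega)]
    simp

/-- the iterated polar derivative along a list of poles -/
def chain : List ℂ → Polynomial ℂ → Polynomial ℂ
  | [], p => p
  | (w::ws), p => chain ws (Dop (ws.length + 1) w p)


lemma chain_eq_C : ∀ (l : List ℂ) (p : Polynomial ℂ), p.natDegree ≤ l.length →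
    chain l p = C (∑ j ∈ Finset.range (l.length + 1),
      (j.factorial : ℂ) * ((l.length - j).factorial : ℂ) * p.coeff j * eL l j) := by
  intro l
  induction l with
  | nil =>
      intro p hp
      simp only [List.length_nil, Nat.zero_add, Finset.range_one, Finset.sum_singleton,
        Nat.factorial_zero, Nat.cast_one, one_mul, eL_zero, mul_one, Nat.zero_sub]
      exact (Polynomial.eq_C_of_natDegree_le_zero hp)
  | cons w ws ih =>
      intro p hp
      have hlen : (w::ws).length = ws.length + 1 := rfl
      set n := ws.length with hn
      have hdeg : (Dop (n+1) w p).natDegree ≤ n := by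
        simpa using Dop_natDegree_le (n+1) w p (by simpa [hlen] using hp)
      have hch : chain (w::ws) p = chain ws (Dop (n+1) w p) := rfl
      rw [hch, ih _ hdeg]
      congr 1
      have key : ∑ j ∈ Finset.range (n+1),
          (j.factorial : ℂ) * ((n - j).factorial : ℂ) * (Dop (n+1) w p).coeff j * eL ws j
          = (∑ j ∈ Finset.range (n+1),
              (j.factorial : ℂ) * (((n+1) - j).factorial : ℂ) * p.coeff j * eL ws j)
            + ∑ j ∈ Finset.range (n+1),
              ((j+1).factorial : ℂ) * ((n - j).factorial : ℂ) * p.coeff (j+1) * (w * eL ws j) := by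
        rw [← Finset.sum_add_distrib]
        refine Finset.sum_congr rfl ?_
        intro j hj
        have hjn : j ≤ n := by simpa [Nat.lt_succ_iff] using hj
        rw [coeff_Dop]
        have e2 : (((n+1-j).factorial : ℕ) : ℂ) = (((n:ℂ)+1) - j) * (((n-j).factorial : ℕ) : ℂ) := by
          have h3 : n+1-j = (n-j)+1 := by omega
          rw [h3, Nat.factorial_succ, Nat.cast_mul, Nat.cast_add, Nat.cast_one,
            Nat.cast_sub hjn]
          ring
        have e3 : (((j+1).factorial : ℕ) : ℂ) = ((j:ℂ)+1) * ((j.factorial : ℕ) : ℂ) := by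
          rw [Nat.factorial_succ, Nat.cast_mul]
          push_cast
          ring
        rw [e2, e3]
        push_cast
        ring
      rw [key]
      -- now handle target sum
      have target : ∑ j ∈ Finset.range ((w::ws).length + 1),
          (j.factorial : ℂ) * (((w::ws).length - j).factorial : ℂ) * p.coeff j * eL (w::ws) j
          = (∑ i ∈ Finset.range (n+1),
              ((i+1).factorial : ℂ) * ((n - i).factorial : ℂ) * p.coeff (i+1)
                * (eL ws (i+1) + w * eL ws i))
            + ((n+1).factorial : ℂ) * p.coeff 0 := by
        rw [hlen, Finset.sum_range_succ']
        congr 1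
        · refine Finset.sum_congr rfl ?_
          intro i hi
          have : n + 1 - (i+1) = n - i := by omega
          rw [this, eL_cons]
        · simp
      rw [target]
      have expand : ∑ i ∈ Finset.range (n+1),
          ((i+1).factorial : ℂ) * ((n - i).factorial : ℂ) * p.coeff (i+1)
            * (eL ws (i+1) + w * eL ws i)
          = (∑ i ∈ Finset.range (n+1),
              ((i+1).factorial : ℂ) * ((n - i).factorial : ℂ) * p.coeff (i+1) * eL ws (i+1))
            + ∑ i ∈ Finset.range (n+1),
              ((i+1).factorial : ℂ) * ((n - i).factorial : ℂ) * p.coeff (i+1) * (w * eL ws i) := by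
        rw [← Finset.sum_add_distrib]
        exact Finset.sum_congr rfl (fun i _ => by ring)
      rw [expand]
      have first : ∑ j ∈ Finset.range (n+1),
          (j.factorial : ℂ) * (((n+1) - j).factorial : ℂ) * p.coeff j * eL ws j
          = (∑ i ∈ Finset.range n,
              ((i+1).factorial : ℂ) * ((n - i).factorial : ℂ) * p.coeff (i+1) * eL ws (i+1))
            + ((n+1).factorial : ℂ) * p.coeff 0 := by
        rw [Finset.sum_range_succ']
        congr 1
        · refine Finset.sum_congr rfl ?_
          intro i hi
          have : n + 1 - (i+1) = n - i := by omega
          rw [this]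
        · simp
      have second : ∑ i ∈ Finset.range (n+1),
          ((i+1).factorial : ℂ) * ((n - i).factorial : ℂ) * p.coeff (i+1) * eL ws (i+1)
          = ∑ i ∈ Finset.range n,
              ((i+1).factorial : ℂ) * ((n - i).factorial : ℂ) * p.coeff (i+1) * eL ws (i+1) := by
        rw [Finset.sum_range_succ, eL_eq_zero (Nat.lt_succ_self n)]
        simp
      rw [second, first]
      ring


lemma eL_one (l : List ℂ) : eL l 1 = l.sum := by
  induction l with
  | nil => rfl
  | cons a t ih => rw [eL_cons, ih, eL_zero, List.sum_cons]; ring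

lemma abs_list_sum_le (l : List ℂ) (h : ∀ β ∈ l, ‖β‖ ≤ 1) :
    ‖l.sum‖ ≤ l.length := by
  induction l with
  | nil => simp
  | cons a t ih =>
      rw [List.sum_cons]
      calc ‖a + t.sum‖ ≤ ‖a‖ + ‖t.sum‖ := norm_add_le _ _
        _ ≤ 1 + t.length := add_le_add (h a (List.mem_cons_self))
            (ih (fun β hb => h β (List.mem_cons_of_mem a hb)))
        _ = ((a::t).length : ℝ) := by simp; ring

lemma list_avg (f : ℂ → ℂ) (c : ℂ) (R : ℝ) : ∀ (l : List ℂ),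
    (∀ β ∈ l, ‖f β - c‖ ≤ R) →
    ‖(l.map f).sum - l.length * c‖ ≤ l.length * R := by
  intro l
  induction l with
  | nil => simp
  | cons a t ih =>
      intro h
      have h1 := h a (List.mem_cons_self)
      have h2 := ih (fun β hb => h β (List.mem_cons_of_mem a hb))
      have e : ((t.map f).sum + f a) - ((a::t).length : ℂ) * c
          = (f a - c) + ((t.map f).sum - t.length * c) := by
        simp only [List.length_cons]
        push_cast
        ring
      simp only [List.map_cons, List.sum_cons]
      calc ‖f a + (t.map f).sum - ((a::t).length : ℂ) * c‖
          = ‖(f a - c) + ((t.map f).sum - t.length * c)‖ := by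
            rw [← e]; ring_nf
        _ ≤ ‖f a - c‖ + ‖(t.map f).sum - t.length * c‖ :=
            norm_add_le _ _
        _ ≤ R + t.length * R := add_le_add h1 h2
        _ = ((a::t).length : ℝ) * R := by simp; ring

lemma sq_identity (z x : ℂ) :
    Complex.normSq (z - x) - Complex.normSq ((starRingEnd ℂ) z * x - 1)
      = (Complex.normSq z - 1) * (1 - Complex.normSq x) := by
  simp only [Complex.normSq_apply, Complex.sub_re, Complex.sub_im, Complex.mul_re,
    Complex.mul_im, Complex.one_re, Complex.one_im, Complex.conj_re, Complex.conj_im]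
  ring

lemma key_abs {z x : ℂ} (h : 0 ≤ (Complex.normSq z - 1) * (1 - Complex.normSq x)) :
    ‖(starRingEnd ℂ) z * x - 1‖ ≤ ‖z - x‖ := by
  have h1 := sq_identity z x
  rw [Complex.norm_def, Complex.norm_def]
  apply Real.sqrt_le_sqrt
  linarith

lemma key_rev {z x : ℂ}
    (h : ‖(starRingEnd ℂ) z * x - 1‖ ≤ ‖z - x‖) :
    0 ≤ (Complex.normSq z - 1) * (1 - Complex.normSq x) := by
  have h1 := sq_identity z x
  have h2 : Complex.normSq ((starRingEnd ℂ) z * x - 1) ≤ Complex.normSq (z - x) := by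
    rw [← Complex.sq_norm, ← Complex.sq_norm]
    exact pow_le_pow_left₀ (norm_nonneg _) h 2
  linarith

lemma inv_diff {z x : ℂ} (hne : z ≠ x) (hs : Complex.normSq z ≠ 1) :
    (z - x)⁻¹ - (starRingEnd ℂ) z / ((Complex.normSq z : ℂ) - 1)
      = ((starRingEnd ℂ) z * x - 1) / ((((Complex.normSq z : ℂ)) - 1) * (z - x)) := by
  have hzx : z - x ≠ 0 := sub_ne_zero.mpr hne
  have hs' : ((Complex.normSq z : ℂ)) - 1 ≠ 0 := by
    intro h
    apply hs
    have := sub_eq_zero.mp h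
    exact_mod_cast congrArg Complex.re this
  have hz : (starRingEnd ℂ) z * z = (Complex.normSq z : ℂ) := by
    rw [mul_comm, Complex.mul_conj]
  field_simp
  linear_combination (-1 : ℂ) * hz

lemma abs_inv_diff {z x : ℂ} (hne : z ≠ x) (hs : Complex.normSq z ≠ 1)
    (h : 0 ≤ (Complex.normSq z - 1) * (1 - Complex.normSq x)) :
    ‖(z - x)⁻¹ - (starRingEnd ℂ) z / ((Complex.normSq z : ℂ) - 1)‖
      ≤ 1 / |Complex.normSq z - 1| := by
  rw [inv_diff hne hs, norm_div, norm_mul]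
  have h1 : ‖(Complex.normSq z : ℂ) - 1‖ = |Complex.normSq z - 1| := by
    rw [show ((Complex.normSq z : ℂ) - 1) = ((Complex.normSq z - 1 : ℝ) : ℂ) by push_cast; ring,
      Complex.norm_real, Real.norm_eq_abs]
  have hzx : (0:ℝ) < ‖z - x‖ := by
    rw [norm_pos_iff]; exact sub_ne_zero.mpr hne
  have hsne : (0:ℝ) < |Complex.normSq z - 1| := by
    rw [abs_pos]; intro hh; exact hs (by linarith)
  rw [h1, div_le_div_iff₀ (by positivity) hsne]
  calc ‖(starRingEnd ℂ) z * x - 1‖ * |Complex.normSq z - 1|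
      ≤ ‖z - x‖ * |Complex.normSq z - 1| := by
        apply mul_le_mul_of_nonneg_right (key_abs h) (le_of_lt hsne)
    _ = 1 * (|Complex.normSq z - 1| * ‖z - x‖) := by ring

lemma abs_inv_diff_rev {z x : ℂ} (hne : z ≠ x) (hs : Complex.normSq z ≠ 1)
    (h : ‖(z - x)⁻¹ - (starRingEnd ℂ) z / ((Complex.normSq z : ℂ) - 1)‖
      ≤ 1 / |Complex.normSq z - 1|) :
    0 ≤ (Complex.normSq z - 1) * (1 - Complex.normSq x) := by
  apply key_rev
  rw [inv_diff hne hs, norm_div, norm_mul] at h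
  have h1 : ‖(Complex.normSq z : ℂ) - 1‖ = |Complex.normSq z - 1| := by
    rw [show ((Complex.normSq z : ℂ) - 1) = ((Complex.normSq z - 1 : ℝ) : ℂ) by push_cast; ring,
      Complex.norm_real, Real.norm_eq_abs]
  have hzx : (0:ℝ) < ‖z - x‖ := by
    rw [norm_pos_iff]; exact sub_ne_zero.mpr hne
  have hsne : (0:ℝ) < |Complex.normSq z - 1| := by
    rw [abs_pos]; intro hh; exact hs (by linarith)
  rw [h1, div_le_div_iff₀ (by positivity) hsne] at h
  calc ‖(starRingEnd ℂ) z * x - 1‖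
      = ‖(starRingEnd ℂ) z * x - 1‖ * |Complex.normSq z - 1| / |Complex.normSq z - 1| := by
        field_simp
    _ ≤ 1 * (|Complex.normSq z - 1| * ‖z - x‖) / |Complex.normSq z - 1| := by
        gcongr
    _ = ‖z - x‖ := by field_simp


lemma deriv_eval : ∀ (l : List ℂ) (z : ℂ), (∀ β ∈ l, z ≠ β) →
    Polynomial.eval z (derivative (PL l))
      = Polynomial.eval z (PL l) * (l.map (fun β => (z - β)⁻¹)).sum := by
  intro l
  induction l with
  | nil => intro z _; simp [PL]
  | cons a t ih =>
      intro z h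
      have ha : z ≠ a := h a (List.mem_cons_self)
      have ha' : z - a ≠ 0 := sub_ne_zero.mpr ha
      have ht : ∀ β ∈ t, z ≠ β := fun β hb => h β (List.mem_cons_of_mem a hb)
      rw [PL_cons, derivative_mul, eval_add, eval_mul, eval_mul, eval_mul, ih z ht]
      simp only [derivative_sub, derivative_X, derivative_C, sub_zero, eval_one, one_mul,
        eval_sub, eval_X, eval_C, List.map_cons, List.sum_cons]
      field_simp

lemma rep (p : Polynomial ℂ) (hp : p ≠ 0) :
    p = C p.leadingCoeff * PL p.roots.toList ∧ p.roots.toList.length = p.natDegree := by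
  have hcard : Multiset.card p.roots = p.natDegree :=
    splits_iff_card_roots.mp (IsAlgClosed.splits p)
  constructor
  · have h := C_leadingCoeff_mul_prod_multiset_X_sub_C (p := p) hcard
    have h2 : PL p.roots.toList = (p.roots.map fun a => X - C a).prod := by
      unfold PL
      conv_rhs => rw [← Multiset.coe_toList p.roots]
      rw [Multiset.map_coe, Multiset.prod_coe]
    rw [h2]
    exact h.symm
  · rw [Multiset.length_toList, hcard]

lemma root_sum_eq (p : Polynomial ℂ) (hp : p ≠ 0) (z : ℂ) (hz : p.eval z ≠ 0) :
    Polynomial.eval z (derivative p)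
      = Polynomial.eval z p * ((p.roots.toList).map (fun β => (z - β)⁻¹)).sum := by
  obtain ⟨hrep, -⟩ := rep p hp
  have hne : ∀ β ∈ p.roots.toList, z ≠ β := by
    intro β hb heq
    apply hz
    rw [heq]
    exact isRoot_of_mem_roots (by rwa [← Multiset.mem_toList])
  have hd : derivative p = C p.leadingCoeff * derivative (PL p.roots.toList) := by
    conv_lhs => rw [hrep]
    rw [derivative_C_mul]
  have he : Polynomial.eval z p = p.leadingCoeff * Polynomial.eval z (PL p.roots.toList) := by
    conv_lhs => rw [hrep]
    rw [eval_mul, eval_C]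
  rw [hd, eval_mul, eval_C, deriv_eval _ z hne, he]
  ring


lemma eval_Dop (N : ℕ) (w : ℂ) (p : Polynomial ℂ) (z : ℂ) :
    (Dop N w p).eval z = (N:ℂ) * p.eval z + (w - z) * (derivative p).eval z := by
  simp [Dop]

/-- Laguerre-type step, exterior version -/
lemma lagOut (p : Polynomial ℂ) (N : ℕ) (hN : 1 ≤ N) (hp0 : p ≠ 0)
    (hdeg : p.natDegree ≤ N) (hroots : ∀ β ∈ p.roots, 1 ≤ ‖β‖)
    (w : ℂ) (hw : ‖w‖ < 1) :
    Dop N w p ≠ 0 ∧ (Dop N w p).natDegree ≤ N - 1 ∧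
      ∀ μ ∈ (Dop N w p).roots, 1 ≤ ‖μ‖ := by
  have hNne : (N:ℂ) ≠ 0 := Nat.cast_ne_zero.mpr (by omega)
  have hnz : Dop N w p ≠ 0 := by
    intro h0
    have heq : C (N:ℂ) * p = (X - C w) * derivative p := by
      have h1 : C (N:ℂ) * p + (C w - X) * derivative p = 0 := h0
      linear_combination h1
    by_cases hd : derivative p = 0
    · rw [hd, mul_zero] at heq
      have hCN : (C (N:ℂ) : Polynomial ℂ) ≠ 0 := by
        simp only [ne_eq, C_eq_zero]
        exact hNne
      exact hp0 ((mul_eq_zero.mp heq).resolve_left hCN)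
    · have hdp : 0 < p.natDegree := by
        by_contra hcon
        push_neg at hcon
        have h00 : p.natDegree = 0 := by omega
        obtain ⟨cc, rfl⟩ := natDegree_eq_zero.mp h00
        simp at hd
      obtain ⟨β, hβ⟩ : ∃ β, β ∈ p.roots := by
        have hcard : Multiset.card p.roots = p.natDegree :=
          splits_iff_card_roots.mp (IsAlgClosed.splits p)
        have hrne : p.roots ≠ 0 := by
          intro hh
          rw [hh] at hcard
          simp at hcard
          omega
        rcases Multiset.exists_mem_of_ne_zero hrne with ⟨β, hβ⟩
        exact ⟨β, hβ⟩
      have hβw : β ≠ w := by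
        intro hh
        have := hroots β hβ
        rw [hh] at this
        linarith
      have hk := derivative_rootMultiplicity_of_root (isRoot_of_mem_roots hβ)
      have hmul : rootMultiplicity β (C (N:ℂ) * p)
          = rootMultiplicity β ((X - C w) * derivative p) := by rw [heq]
      have hCN : (C (N:ℂ) : Polynomial ℂ) ≠ 0 := by
        simp only [ne_eq, C_eq_zero]
        exact hNne
      rw [rootMultiplicity_mul (mul_ne_zero hCN hp0),
        rootMultiplicity_mul (mul_ne_zero (X_sub_C_ne_zero w) hd),
        rootMultiplicity_eq_zero (p := X - C w)
          (by simp [IsRoot]; exact sub_ne_zero.mpr hβw),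
        rootMultiplicity_eq_zero (p := C (N:ℂ))
          (by simp only [IsRoot, eval_C]; exact hNne), hk] at hmul
      have hpos : 0 < rootMultiplicity β p :=
        (rootMultiplicity_pos hp0).mpr (isRoot_of_mem_roots hβ)
      omega
  refine ⟨hnz, Dop_natDegree_le N w p hdeg, ?_⟩
  intro μ hμ
  by_contra hcon
  push_neg at hcon
  have hμroot : (Dop N w p).eval μ = 0 := isRoot_of_mem_roots hμ
  have hpμ : p.eval μ ≠ 0 := by
    intro h0
    have : μ ∈ p.roots := (mem_roots hp0).mpr h0
    linarith [hroots μ this]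
  rw [eval_Dop, root_sum_eq p hp0 μ hpμ] at hμroot
  set l := p.roots.toList with hl
  set T := (l.map (fun β => (μ - β)⁻¹)).sum with hT
  have heq2 : (N:ℂ) + (w - μ) * T = 0 := by
    have h2 : Polynomial.eval μ p * ((N:ℂ) + (w - μ) * T) = 0 := by
      linear_combination hμroot
    rcases mul_eq_zero.mp h2 with h | h
    · exact absurd h hpμ
    · exact h
  have hμw : μ ≠ w := by
    intro hh
    apply hNne
    rw [hh] at heq2
    simpa using heq2
  have hsne : Complex.normSq μ ≠ 1 := by
    have : Complex.normSq μ < 1 := by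
      rw [← Complex.sq_norm]
      nlinarith [norm_nonneg μ]
    linarith
  set c : ℂ := (starRingEnd ℂ) μ / ((Complex.normSq μ : ℂ) - 1) with hcdef
  set R : ℝ := 1 / |Complex.normSq μ - 1| with hRdef
  have hmem : ∀ β ∈ l, ‖(μ - β)⁻¹ - c‖ ≤ R := by
    intro β hb
    have hβr : β ∈ p.roots := by rwa [hl, Multiset.mem_toList] at hb
    have h1 : 1 ≤ ‖β‖ := hroots β hβr
    have hμβ : μ ≠ β := by
      intro hh
      rw [hh] at hcon
      linarith
    apply abs_inv_diff hμβ hsne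
    have h2 : 1 ≤ Complex.normSq β := by
      rw [← Complex.sq_norm]
      nlinarith
    have h3 : Complex.normSq μ < 1 := by
      rw [← Complex.sq_norm]
      nlinarith [norm_nonneg μ]
    nlinarith
  have habs1 : ‖(Complex.normSq μ : ℂ) - 1‖ = |Complex.normSq μ - 1| := by
    rw [show ((Complex.normSq μ : ℂ) - 1) = ((Complex.normSq μ - 1 : ℝ) : ℂ) by push_cast; ring,
      Complex.norm_real, Real.norm_eq_abs]
  have hpos : 0 < |Complex.normSq μ - 1| := by
    rw [abs_pos]; intro hh; exact hsne (by linarith)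
  have hc0 : ‖0 - c‖ ≤ R := by
    rw [hcdef, hRdef, zero_sub, norm_neg, norm_div, habs1, Complex.norm_conj,
      div_le_div_iff₀ hpos hpos]
    have : ‖μ‖ ≤ 1 := le_of_lt hcon
    nlinarith
  have hlenle : (l.length : ℝ) ≤ N := by
    have h5 := (rep p hp0).2
    rw [← hl] at h5
    rw [h5]
    exact_mod_cast hdeg
  have hR0 : 0 ≤ R := by rw [hRdef]; positivity
  have havg : ‖T - N * c‖ ≤ N * R := by
    have h1 := list_avg (fun β => (μ - β)⁻¹) c R l hmem
    rw [← hT] at h1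
    calc ‖T - N * c‖
        = ‖(T - l.length * c) + ((l.length : ℂ) - N) * c‖ := by
          congr 1
          ring
      _ ≤ ‖T - l.length * c‖ + ‖((l.length : ℂ) - N) * c‖ :=
          norm_add_le _ _
      _ ≤ l.length * R + ((N : ℝ) - l.length) * R := by
          apply add_le_add h1
          rw [norm_mul]
          have e1 : ‖(l.length : ℂ) - N‖ = (N : ℝ) - l.length := by
            rw [show ((l.length : ℂ) - (N:ℂ)) = (((l.length : ℝ) - N : ℝ) : ℂ) by push_cast; ring,
              Complex.norm_real, Real.norm_eq_abs, abs_of_nonpos (by linarith)]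
            ring
          rw [e1]
          have e2 : ‖c‖ = ‖0 - c‖ := by rw [zero_sub, norm_neg]
          rw [e2]
          apply mul_le_mul_of_nonneg_left hc0 (by linarith)
      _ = N * R := by ring
  have hu : (μ - w)⁻¹ = T / N := by
    have hμw' : μ - w ≠ 0 := sub_ne_zero.mpr hμw
    field_simp
    linear_combination heq2
  have hfin : ‖(μ - w)⁻¹ - c‖ ≤ R := by
    rw [hu]
    have hNpos : (0:ℝ) < N := by exact_mod_cast hN
    have h6 : T / (N:ℂ) - c = (T - N * c) / N := by field_simp
    rw [h6, norm_div]
    rw [show ‖((N:ℕ):ℂ)‖ = ((N:ℕ):ℝ) by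
      rw [show ((N:ℕ):ℂ) = (((N:ℕ):ℝ):ℂ) by push_cast; ring, Complex.norm_real, Real.norm_eq_abs,
        abs_of_nonneg (by positivity)]]
    rw [div_le_iff₀ hNpos]
    calc ‖T - N*c‖ ≤ N * R := havg
      _ = R * N := by ring
  have hres := abs_inv_diff_rev hμw hsne hfin
  have h3 : Complex.normSq μ < 1 := by
    rw [← Complex.sq_norm]
    nlinarith [norm_nonneg μ]
  have h4 : Complex.normSq w < 1 := by
    rw [← Complex.sq_norm]
    nlinarith [norm_nonneg w]
  nlinarith

/-- Laguerre-type step, interior version -/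
lemma lagIn (p : Polynomial ℂ) (m : ℕ) (hm : 1 ≤ m) (hp0 : p ≠ 0)
    (hdeg : p.natDegree = m) (hroots : ∀ β ∈ p.roots, ‖β‖ ≤ 1)
    (w : ℂ) (hw : 1 < ‖w‖) :
    Dop m w p ≠ 0 ∧ (Dop m w p).natDegree = m - 1 ∧
      ∀ μ ∈ (Dop m w p).roots, ‖μ‖ ≤ 1 := by
  obtain ⟨hrep, hlen⟩ := rep p hp0
  set l := p.roots.toList with hl
  have hlabs : ∀ β ∈ l, ‖β‖ ≤ 1 := by
    intro β hb
    exact hroots β (by rwa [hl, Multiset.mem_toList] at hb)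
  have hlc : p.leadingCoeff ≠ 0 := leadingCoeff_ne_zero.mpr hp0
  -- leading coefficient of Dop
  have hcoeffm1 : (Dop m w p).coeff (m-1) = p.leadingCoeff * ((m:ℂ) * w - l.sum) := by
    have h1 : (m:ℂ) - ((m-1 : ℕ):ℂ) = 1 := by
      rw [Nat.cast_sub hm]
      push_cast
      ring
    have h2 : (m-1) + 1 = m := by omega
    rw [coeff_Dop, h2, h1, one_mul]
    have hpm : p.coeff m = p.leadingCoeff := by
      rw [← hdeg]
      rfl
    have hpm1 : p.coeff (m-1) = p.leadingCoeff * (- l.sum) := by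
      conv_lhs => rw [hrep]
      rw [coeff_C_mul, PL_coeff l (m-1) 1 (by rw [hlen, hdeg]; omega), eL_one]
      ring
    rw [hpm, hpm1, Nat.cast_sub hm]
    push_cast
    ring
  have hlead : p.leadingCoeff * ((m:ℂ) * w - l.sum) ≠ 0 := by
    apply mul_ne_zero hlc
    intro hh
    have heq : (m:ℂ) * w = l.sum := by linear_combination hh
    have h1 : ‖(m:ℂ)*w‖ = m * ‖w‖ := by
      rw [norm_mul]
      congr 1
      rw [show ((m:ℕ):ℂ) = (((m:ℕ):ℝ):ℂ) by push_cast; ring, Complex.norm_real, Real.norm_eq_abs,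
        abs_of_nonneg (by positivity)]
    have h2 : ‖l.sum‖ ≤ l.length := abs_list_sum_le l hlabs
    rw [heq] at h1
    rw [hlen, hdeg] at h2
    have hm1 : (1:ℝ) ≤ m := by exact_mod_cast hm
    nlinarith
  have hnz : Dop m w p ≠ 0 := by
    intro hh
    apply hlead
    rw [← hcoeffm1, hh, coeff_zero]
  have hDdeg : (Dop m w p).natDegree = m - 1 := by
    apply le_antisymm (Dop_natDegree_le m w p (le_of_eq hdeg))
    apply le_natDegree_of_ne_zero
    rw [hcoeffm1]
    exact hlead
  refine ⟨hnz, hDdeg, ?_⟩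
  intro μ hμ
  by_contra hcon
  push_neg at hcon
  have hμroot : (Dop m w p).eval μ = 0 := isRoot_of_mem_roots hμ
  have hpμ : p.eval μ ≠ 0 := by
    intro h0
    have : μ ∈ p.roots := (mem_roots hp0).mpr h0
    linarith [hroots μ this]
  rw [eval_Dop, root_sum_eq p hp0 μ hpμ] at hμroot
  set T := (l.map (fun β => (μ - β)⁻¹)).sum with hT
  have hmne : (m:ℂ) ≠ 0 := Nat.cast_ne_zero.mpr (by omega)
  have heq2 : (m:ℂ) + (w - μ) * T = 0 := by
    have h2 : Polynomial.eval μ p * ((m:ℂ) + (w - μ) * T) = 0 := by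
      linear_combination hμroot
    rcases mul_eq_zero.mp h2 with h | h
    · exact absurd h hpμ
    · exact h
  have hμw : μ ≠ w := by
    intro hh
    apply hmne
    rw [hh] at heq2
    simpa using heq2
  have hsne : Complex.normSq μ ≠ 1 := by
    have : 1 < Complex.normSq μ := by
      rw [← Complex.sq_norm]
      nlinarith
    linarith
  set c : ℂ := (starRingEnd ℂ) μ / ((Complex.normSq μ : ℂ) - 1) with hcdef
  set R : ℝ := 1 / |Complex.normSq μ - 1| with hRdef
  have hmem : ∀ β ∈ l, ‖(μ - β)⁻¹ - c‖ ≤ R := by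
    intro β hb
    have h1 : ‖β‖ ≤ 1 := hlabs β hb
    have hμβ : μ ≠ β := by
      intro hh
      rw [hh] at hcon
      linarith
    apply abs_inv_diff hμβ hsne
    have h2 : Complex.normSq β ≤ 1 := by
      rw [← Complex.sq_norm]
      nlinarith [norm_nonneg β]
    have h3 : 1 < Complex.normSq μ := by
      rw [← Complex.sq_norm]
      nlinarith
    nlinarith
  have havg : ‖T - m * c‖ ≤ m * R := by
    have h1 := list_avg (fun β => (μ - β)⁻¹) c R l hmem
    rw [← hT] at h1
    have : (l.length : ℂ) = (m : ℂ) := by rw [hlen, hdeg]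
    rw [this] at h1
    have : (l.length : ℝ) = (m : ℝ) := by rw [hlen, hdeg]
    rwa [this] at h1
  have hu : (μ - w)⁻¹ = T / m := by
    have hμw' : μ - w ≠ 0 := sub_ne_zero.mpr hμw
    field_simp
    linear_combination heq2
  have hfin : ‖(μ - w)⁻¹ - c‖ ≤ R := by
    rw [hu]
    have hmpos : (0:ℝ) < m := by exact_mod_cast hm
    have : T / (m:ℂ) - c = (T - m * c) / m := by field_simp
    rw [this, norm_div]
    rw [show ‖(m:ℂ)‖ = (m:ℝ) by
      rw [show ((m:ℕ):ℂ) = (((m:ℕ):ℝ):ℂ) by push_cast; ring, Complex.norm_real, Real.norm_eq_abs,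
        abs_of_nonneg (by positivity)]]
    rw [div_le_iff₀ hmpos]
    calc ‖T - m*c‖ ≤ m * R := havg
      _ = R * m := by ring
  have hres := abs_inv_diff_rev hμw hsne hfin
  have h3 : 1 < Complex.normSq μ := by
    rw [← Complex.sq_norm]
    nlinarith
  have h4 : 1 < Complex.normSq w := by
    rw [← Complex.sq_norm]
    nlinarith
  nlinarith



lemma chainOut : ∀ (l : List ℂ) (p : Polynomial ℂ), p ≠ 0 → p.natDegree ≤ l.length →
    (∀ β ∈ p.roots, 1 ≤ ‖β‖) → (∀ x ∈ l, ‖x‖ < 1) →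
    chain l p ≠ 0 := by
  intro l
  induction l with
  | nil => intro p hp0 _ _ _; exact hp0
  | cons w ws ih =>
      intro p hp0 hdeg hroots hlt
      have h := lagOut p (ws.length + 1) (by omega) hp0 (by simpa using hdeg) hroots w
        (hlt w (List.mem_cons_self))
      exact ih (Dop (ws.length + 1) w p) h.1 (by simpa using h.2.1) h.2.2
        (fun x hx => hlt x (List.mem_cons_of_mem w hx))

lemma chainIn : ∀ (l : List ℂ) (p : Polynomial ℂ), p ≠ 0 → p.natDegree = l.length →
    (∀ β ∈ p.roots, ‖β‖ ≤ 1) → (∀ x ∈ l, 1 < ‖x‖) →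
    chain l p ≠ 0 := by
  intro l
  induction l with
  | nil => intro p hp0 _ _ _; exact hp0
  | cons w ws ih =>
      intro p hp0 hdeg hroots hgt
      have h := lagIn p (ws.length + 1) (by omega) hp0 (by simpa using hdeg) hroots w
        (hgt w (List.mem_cons_self))
      exact ih (Dop (ws.length + 1) w p) h.1 (by simpa using h.2.1) h.2.2
        (fun x hx => hgt x (List.mem_cons_of_mem w hx))

end FFPAux
end



open Polynomial Finset

noncomputable section

namespace FFP

/-- Coefficient `e_k(p)` defined by `p(x) = Σ (-1)^k e_k(p) x^(n-k)`. -/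
def eC (n k : ℕ) (p : Polynomial ℂ) : ℂ := (-1) ^ k * p.coeff (n - k)

/-- Falling factorial `x(x-1)⋯(x-k+1)`. -/
def ffa (x : ℂ) (k : ℕ) : ℂ := ∏ i ∈ Finset.range k, (x - i)

/-- Rising factorial `x(x+1)⋯(x+k-1)`. -/
def rfa (x : ℂ) (k : ℕ) : ℂ := ∏ i ∈ Finset.range k, (x + i)

/-- Monic polynomial of degree `n` from prescribed `e_k` coefficients. -/
def ofE (n : ℕ) (f : ℕ → ℂ) : Polynomial ℂ :=
  ∑ k ∈ Finset.range (n + 1), Polynomial.C ((-1) ^ k * f k) * Polynomial.X ^ (n - k)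

/-- Finite free additive convolution. -/
def boxplus (n : ℕ) (p q : Polynomial ℂ) : Polynomial ℂ :=
  ofE n fun k => ffa (n : ℂ) k * ∑ ij ∈ Finset.HasAntidiagonal.antidiagonal k,
    eC n ij.1 p * eC n ij.2 q / (ffa (n : ℂ) ij.1 * ffa (n : ℂ) ij.2)

/-- Finite free multiplicative convolution. -/
def boxtimes (n : ℕ) (p q : Polynomial ℂ) : Polynomial ℂ :=
  ofE n fun k => eC n k p * eC n k q / (n.choose k : ℂ)

/-- Dilation: `(dil n α p)(x) = α^n p(x/α)` for polynomials of degree ≤ n. -/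
def dil (n : ℕ) (α : ℂ) (p : Polynomial ℂ) : Polynomial ℂ :=
  ∑ j ∈ Finset.range (n + 1), Polynomial.C (α ^ (n - j) * p.coeff j) * Polynomial.X ^ j

/-- Symmetrization. -/
def sym (n : ℕ) (p : Polynomial ℂ) : Polynomial ℂ := boxplus n p (dil n (-1) p)

/-- Degree halving operation. -/
def Qm (m : ℕ) (p : Polynomial ℂ) : Polynomial ℂ :=
  ofE m fun k => (-1) ^ k * eC (2 * m) (2 * k) p

/-- Degree doubling operation. -/
def Sm (p : Polynomial ℂ) : Polynomial ℂ := p.comp (Polynomial.X ^ 2)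

/-- Hypergeometric polynomial `H_n[b; a]`. -/
def hyp (n : ℕ) {j i : ℕ} (b : Fin j → ℝ) (a : Fin i → ℝ) : Polynomial ℂ :=
  ofE n fun k =>
    (n.choose k : ℂ) * (∏ t, ffa ((n : ℂ) * (b t : ℂ)) k) / ∏ s, ffa ((n : ℂ) * (a s : ℂ)) k

/-- Even hypergeometric polynomial `H^E_m[b; a](x) = H_m[b; a](x²)`. -/
def hypE (m : ℕ) {j i : ℕ} (b : Fin j → ℝ) (a : Fin i → ℝ) : Polynomial ℂ :=
  (hyp m b a).comp (Polynomial.X ^ 2)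

/-- A monic polynomial of degree `2m` is even: all odd `e`-coefficients vanish. -/
def IsEvenP (m : ℕ) (p : Polynomial ℂ) : Prop :=
  ∀ k ≤ 2 * m, Odd k → eC (2 * m) k p = 0

/-- the finite free multiplicative convolution of two monic degree-n
polynomials with all roots on the unit circle has all roots on the unit circle. -/
theorem stmt1 (n : ℕ) (hn : 1 ≤ n) (p q : Polynomial ℂ)
    (hpm : p.Monic) (hpd : p.natDegree = n)
    (hqm : q.Monic) (hqd : q.natDegree = n)
    (hp : ∀ z : ℂ, p.IsRoot z → ‖z‖ = 1)
    (hq : ∀ z : ℂ, q.IsRoot z → ‖z‖ = 1) :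
    ∀ z : ℂ, (boxtimes n p q).IsRoot z → ‖z‖ = 1 := by
  intro z hz
  by_contra habs
  have hp0 : p ≠ 0 := hpm.ne_zero
  have hq0 : q ≠ 0 := hqm.ne_zero
  obtain ⟨hqrep, hqlen⟩ := FFPAux.rep q hq0
  set b := q.roots.toList with hb
  have hblen : b.length = n := by rw [hqlen, hqd]
  have habsb : ∀ β ∈ b, ‖β‖ = 1 := by
    intro β h
    exact hq β (isRoot_of_mem_roots (by rwa [hb, Multiset.mem_toList] at h))
  have hbne : ∀ β ∈ b, β ≠ 0 := by
    intro β h h0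
    have := habsb β h
    rw [h0] at this
    simp at this
  have hqPL : q = FFPAux.PL b := by
    rw [hqrep, Monic.leadingCoeff hqm, map_one, one_mul]
  have hqcoeff : ∀ i j : ℕ, i + j = n → q.coeff i = (-1)^j * FFPAux.eL b j := by
    intro i j h
    rw [hqPL]
    exact FFPAux.PL_coeff b i j (by rw [hblen]; exact h)
  have hq00 : q.coeff 0 ≠ 0 := by
    rw [coeff_zero_eq_eval_zero]
    intro h
    have := hq 0 h
    simp at this
  have heLn : FFPAux.eL b n ≠ 0 := by
    intro h
    apply hq00
    rw [hqcoeff 0 n (by omega), h, mul_zero]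
  set l := b.map (fun β => z/β) with hl
  have hllen : l.length = n := by rw [hl, List.length_map, hblen]
  have hlabs : ∀ x ∈ l, ‖x‖ = ‖z‖ := by
    intro x hx
    rw [hl] at hx
    obtain ⟨β, hβ, rfl⟩ := List.mem_map.mp hx
    rw [norm_div, habsb β hβ, div_one]
  have heLl : ∀ j : ℕ, j ≤ n → FFPAux.eL l j * FFPAux.eL b n
      = z^j * FFPAux.eL b (n-j) := by
    intro j hj
    have h := FFPAux.eL_div z b hbne (n-j) j (by rw [hblen]; omega)
    rw [hblen] at h
    exact h
  -- evaluation of the convolution at z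
  have hev : ∑ j ∈ Finset.range (n+1),
      (-1:ℂ)^(n-j) * (p.coeff j * q.coeff j / (n.choose (n-j) : ℂ)) * z^j = 0 := by
    have h0 : (boxtimes n p q).eval z = 0 := hz
    have h1 : (boxtimes n p q).eval z = ∑ k ∈ Finset.range (n+1),
        (-1:ℂ)^k * (p.coeff (n-k) * q.coeff (n-k) / (n.choose k : ℂ)) * z^(n-k) := by
      rw [boxtimes, ofE, eval_finset_sum]
      refine Finset.sum_congr rfl ?_
      intro k _
      rw [eval_mul, eval_C, eval_pow, eval_X, eC, eC]
      ring_nf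
      congr 1
      rw [pow_mul]
      rcases Nat.even_or_odd k with he | ho
      · rw [he.neg_one_pow]
        norm_num
      · rw [ho.neg_one_pow]
        norm_num
    rw [h1] at h0
    rw [← h0]
    rw [← Finset.sum_range_reflect]
    refine Finset.sum_congr rfl ?_
    intro j hj
    have hjn : j ≤ n := by
      have := Finset.mem_range.mp hj
      omega
    have e1 : n + 1 - 1 - j = n - j := by omega
    have e2 : n - (n - j) = j := by omega
    rw [e1, e2]
  -- the S-sum is zero
  have hchain := FFPAux.chain_eq_C l p (by rw [hllen, hpd])
  rw [hllen] at hchain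
  set S : ℂ := ∑ j ∈ Finset.range (n + 1),
      (j.factorial : ℂ) * ((n - j).factorial : ℂ) * p.coeff j * FFPAux.eL l j with hS
  have hSzero : S = 0 := by
    have hmul : S * FFPAux.eL b n = (n.factorial : ℂ) *
        ∑ j ∈ Finset.range (n+1),
          (-1:ℂ)^(n-j) * (p.coeff j * q.coeff j / (n.choose (n-j) : ℂ)) * z^j := by
      rw [hS, Finset.sum_mul, Finset.mul_sum]
      refine Finset.sum_congr rfl ?_
      intro j hj
      have hjn : j ≤ n := by
        have := Finset.mem_range.mp hj
        omega
      have hcs : n.choose (n-j) = n.choose j := Nat.choose_symm hjn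
      have hfact : ((n.choose j : ℂ)) * (j.factorial : ℂ) * ((n-j).factorial : ℂ)
          = (n.factorial : ℂ) := by
        have := Nat.choose_mul_factorial_mul_factorial hjn
        exact_mod_cast congrArg (Nat.cast : ℕ → ℂ) this
      have hcne : ((n.choose j : ℕ) : ℂ) ≠ 0 :=
        Nat.cast_ne_zero.mpr (Nat.choose_pos hjn).ne'
      have heb : FFPAux.eL b (n-j) = (-1:ℂ)^(n-j) * q.coeff j := by
        rw [hqcoeff j (n-j) (by omega), ← mul_assoc, ← pow_add]
        have : Even ((n-j) + (n-j)) := ⟨n-j, rfl⟩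
        rw [this.neg_one_pow, one_mul]
      calc (j.factorial : ℂ) * ((n - j).factorial : ℂ) * p.coeff j * FFPAux.eL l j
            * FFPAux.eL b n
          = (j.factorial : ℂ) * ((n - j).factorial : ℂ) * p.coeff j
            * (FFPAux.eL l j * FFPAux.eL b n) := by ring
        _ = (j.factorial : ℂ) * ((n - j).factorial : ℂ) * p.coeff j
            * (z^j * ((-1:ℂ)^(n-j) * q.coeff j)) := by rw [heLl j hjn, heb]
        _ = (n.factorial : ℂ) * ((-1:ℂ)^(n-j) * (p.coeff j * q.coeff j
              / (n.choose (n-j) : ℂ)) * z^j) := by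
            rw [hcs, ← hfact]
            field_simp
    rw [hev, mul_zero] at hmul
    rcases mul_eq_zero.mp hmul with h | h
    · exact h
    · exact absurd h heLn
  rw [hSzero, map_zero] at hchain
  rcases lt_or_gt_of_ne habs with hlt | hgt
  · refine FFPAux.chainOut l p hp0 (by rw [hllen, hpd]) ?_ ?_ hchain
    · intro β h
      exact le_of_eq (hp β (isRoot_of_mem_roots h)).symm
    · intro x hx
      rw [hlabs x hx]
      exact hlt
  · refine FFPAux.chainIn l p hp0 (by rw [hllen, hpd]) ?_ ?_ hchain
    · intro β h
      exact le_of_eq (hp β (isRoot_of_mem_roots h))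
    · intro x hx
      rw [hlabs x hx]
      exact hgt


end FFP
end
end

section
/- Let p, q be monic polynomials of degree n over ℂ, let α ∈ ℂ, and write c_α(x) = (x−α)^n. Then: (1) Sym(p) is an even polynomial, i.e., e_k(Sym(p)) = 0 for all odd k; (2) Sym(p ⊞_n q) = Sym(p) ⊞_n Sym(q); (3) for α ≠ 0, Sym(Dil_α p) = Dil_α Sym(p); (4) Sym(p ⊞_n c_α) = Sym(p). -/
open Polynomial Finset

noncomputable section

namespace FFP

section Aux

open PowerSeries

lemma ffa_ne_zero {n k : ℕ} (h : k ≤ n) : ffa (n : ℂ) k ≠ 0 := by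
  unfold ffa
  rw [Finset.prod_ne_zero_iff]
  intro i hi
  have hi' : i < n := lt_of_lt_of_le (Finset.mem_range.mp hi) h
  rw [sub_ne_zero]
  exact_mod_cast hi'.ne'

lemma coeff_ofE {n k : ℕ} (f : ℕ → ℂ) (h : k ≤ n) :
    (ofE n f).coeff (n - k) = (-1) ^ k * f k := by
  unfold ofE
  rw [Polynomial.finset_sum_coeff, Finset.sum_eq_single k]
  · rw [Polynomial.coeff_C_mul, Polynomial.coeff_X_pow, if_pos rfl, mul_one]
  · intro j hj hjk
    have hj' : j ≤ n := Nat.lt_succ_iff.mp (Finset.mem_range.mp hj)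
    rw [Polynomial.coeff_C_mul, Polynomial.coeff_X_pow, if_neg (by omega), mul_zero]
  · intro hk
    exact absurd (Finset.mem_range.mpr (by omega)) hk

lemma eC_ofE {n k : ℕ} (f : ℕ → ℂ) (h : k ≤ n) : eC n k (ofE n f) = f k := by
  rw [eC, coeff_ofE f h, ← mul_assoc, ← mul_pow]
  simp

lemma ofE_congr {n : ℕ} {f g : ℕ → ℂ} (h : ∀ k ≤ n, f k = g k) : ofE n f = ofE n g := by
  unfold ofE
  exact Finset.sum_congr rfl fun k hk => by
    rw [h k (Nat.lt_succ_iff.mp (Finset.mem_range.mp hk))]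

lemma coeff_dil {n j : ℕ} (α : ℂ) (p : Polynomial ℂ) (h : j ≤ n) :
    (dil n α p).coeff j = α ^ (n - j) * p.coeff j := by
  unfold dil
  rw [Polynomial.finset_sum_coeff, Finset.sum_eq_single j]
  · rw [Polynomial.coeff_C_mul, Polynomial.coeff_X_pow, if_pos rfl, mul_one]
  · intro i hi hij
    rw [Polynomial.coeff_C_mul, Polynomial.coeff_X_pow, if_neg (fun hh => hij hh.symm), mul_zero]
  · intro hj
    exact absurd (Finset.mem_range.mpr (by omega)) hj

lemma eC_dil {n k : ℕ} (α : ℂ) (p : Polynomial ℂ) (h : k ≤ n) :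
    eC n k (dil n α p) = α ^ k * eC n k p := by
  rw [eC, eC, coeff_dil α p (Nat.sub_le n k)]
  have : n - (n - k) = k := by omega
  rw [this]; ring

/-- The truncated "e over falling factorial" generating series. -/
def T (n : ℕ) (p : Polynomial ℂ) : PowerSeries ℂ :=
  PowerSeries.mk fun k => if k ≤ n then eC n k p / ffa (n : ℂ) k else 0

lemma coeff_T {n k : ℕ} (p : Polynomial ℂ) :
    PowerSeries.coeff k (T n p) = if k ≤ n then eC n k p / ffa (n : ℂ) k else 0 :=
  PowerSeries.coeff_mk _ _

lemma T_dil {n : ℕ} (α : ℂ) (p : Polynomial ℂ) :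
    T n (dil n α p) = rescale α (T n p) := by
  ext k
  rw [coeff_rescale, coeff_T, coeff_T]
  split
  · rename_i h
    rw [eC_dil α p h, mul_div_assoc]
  · rw [mul_zero]

lemma boxplus_eq (n : ℕ) (p q : Polynomial ℂ) :
    boxplus n p q = ofE n fun k => ffa (n : ℂ) k * PowerSeries.coeff k (T n p * T n q) := by
  unfold boxplus
  apply ofE_congr
  intro k hk
  rw [PowerSeries.coeff_mul]
  congr 1
  apply Finset.sum_congr rfl
  intro ij hij
  have hij' : ij.1 + ij.2 = k := Finset.HasAntidiagonal.mem_antidiagonal.mp hij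
  rw [coeff_T, coeff_T, if_pos (by omega), if_pos (by omega), div_mul_div_comm]

lemma eC_boxplus {n k : ℕ} (p q : Polynomial ℂ) (h : k ≤ n) :
    eC n k (boxplus n p q) = ffa (n : ℂ) k * PowerSeries.coeff k (T n p * T n q) := by
  rw [boxplus_eq, eC_ofE _ h]

lemma coeff_T_boxplus {n k : ℕ} (p q : Polynomial ℂ) (h : k ≤ n) :
    PowerSeries.coeff k (T n (boxplus n p q)) = PowerSeries.coeff k (T n p * T n q) := by
  rw [coeff_T, if_pos h, eC_boxplus p q h, mul_div_cancel_left₀ _ (ffa_ne_zero h)]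

lemma coeff_mul_congr {k : ℕ} {F F' G G' : PowerSeries ℂ}
    (hF : ∀ i ≤ k, PowerSeries.coeff i F = PowerSeries.coeff i F')
    (hG : ∀ i ≤ k, PowerSeries.coeff i G = PowerSeries.coeff i G') :
    PowerSeries.coeff k (F * G) = PowerSeries.coeff k (F' * G') := by
  rw [PowerSeries.coeff_mul, PowerSeries.coeff_mul]
  apply Finset.sum_congr rfl
  intro ij hij
  have hij' : ij.1 + ij.2 = k := Finset.HasAntidiagonal.mem_antidiagonal.mp hij
  rw [hF ij.1 (by omega), hG ij.2 (by omega)]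

lemma sym_eq (n : ℕ) (p : Polynomial ℂ) :
    sym n p = ofE n fun k => ffa (n : ℂ) k *
      PowerSeries.coeff k (T n p * rescale (-1) (T n p)) := by
  rw [sym, boxplus_eq, T_dil]

lemma eC_sym {n k : ℕ} (p : Polynomial ℂ) (h : k ≤ n) :
    eC n k (sym n p) = ffa (n : ℂ) k *
      PowerSeries.coeff k (T n p * rescale (-1) (T n p)) := by
  rw [sym_eq, eC_ofE _ h]

lemma coeff_T_sym {n k : ℕ} (p : Polynomial ℂ) (h : k ≤ n) :
    PowerSeries.coeff k (T n (sym n p)) =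
      PowerSeries.coeff k (T n p * rescale (-1) (T n p)) := by
  rw [sym, coeff_T_boxplus _ _ h, T_dil]

lemma coeff_mul_rescale_neg_one_odd (F : PowerSeries ℂ) {k : ℕ} (hk : Odd k) :
    PowerSeries.coeff k (F * rescale (-1) F) = 0 := by
  rw [PowerSeries.coeff_mul]
  set S := ∑ ij ∈ Finset.HasAntidiagonal.antidiagonal k,
    PowerSeries.coeff ij.1 F * PowerSeries.coeff ij.2 (rescale (-1) F) with hS
  have hswap : S = ∑ ij ∈ Finset.HasAntidiagonal.antidiagonal k,
      PowerSeries.coeff ij.2 F * PowerSeries.coeff ij.1 (rescale (-1) F) := by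
    rw [hS]
    nth_rewrite 1 [← Finset.HasAntidiagonal.map_swap_antidiagonal (n := k)]
    rw [Finset.sum_map]
    simp
  have hneg : S = -S := by
    nth_rewrite 1 [hswap]
    rw [← Finset.sum_neg_distrib]
    apply Finset.sum_congr rfl
    intro ij hij
    have hij' : ij.1 + ij.2 = k := Finset.HasAntidiagonal.mem_antidiagonal.mp hij
    rw [coeff_rescale, coeff_rescale]
    have h1 : ((-1 : ℂ)) ^ ij.1 * (-1) ^ ij.2 = -1 := by
      rw [← pow_add, hij']
      exact hk.neg_one_pow
    have h2 : ((-1 : ℂ)) ^ ij.1 = -(-1) ^ ij.2 := by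
      have hsq : ((-1 : ℂ)) ^ ij.2 * (-1) ^ ij.2 = 1 := by
        rw [← pow_add, ← two_mul]
        exact (even_two_mul ij.2).neg_one_pow
      calc ((-1 : ℂ)) ^ ij.1 = (-1) ^ ij.1 * ((-1) ^ ij.2 * (-1) ^ ij.2) := by rw [hsq, mul_one]
        _ = ((-1) ^ ij.1 * (-1) ^ ij.2) * (-1) ^ ij.2 := by ring
        _ = -(-1) ^ ij.2 := by rw [h1]; ring
    rw [h2]; ring
  have h0 : S + S = 0 := add_eq_zero_iff_eq_neg.mpr hneg
  exact add_self_eq_zero.mp h0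





lemma dil_ofE (n : ℕ) (α : ℂ) (f : ℕ → ℂ) :
    dil n α (ofE n f) = ofE n fun k => α ^ k * f k := by
  unfold dil
  rw [← Finset.sum_range_reflect]
  rw [show ofE n (fun k => α ^ k * f k) = ∑ k ∈ Finset.range (n + 1),
    Polynomial.C ((-1) ^ k * (α ^ k * f k)) * Polynomial.X ^ (n - k) from rfl]
  apply Finset.sum_congr rfl
  intro k hk
  have hk' : k ≤ n := Nat.lt_succ_iff.mp (Finset.mem_range.mp hk)
  have h1 : n + 1 - 1 - k = n - k := by omega
  rw [h1, coeff_ofE f hk']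
  have h2 : n - (n - k) = k := by omega
  rw [h2]
  congr 2
  ring

set_option maxHeartbeats 1000000 in
lemma part2 (n : ℕ) (p q : Polynomial ℂ) :
    sym n (boxplus n p q) = boxplus n (sym n p) (sym n q) := by
  conv_lhs => rw [sym_eq]
  conv_rhs => rw [boxplus_eq]
  apply ofE_congr
  intro k hk
  refine congrArg (ffa (n : ℂ) k * ·) ?_
  have L : PowerSeries.coeff k (T n (boxplus n p q) * rescale (-1) (T n (boxplus n p q)))
      = PowerSeries.coeff k ((T n p * T n q) * rescale (-1) (T n p * T n q)) := by
    apply coeff_mul_congr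
    · intro i hi; exact coeff_T_boxplus p q (le_trans hi hk)
    · intro i hi
      rw [coeff_rescale, coeff_rescale, coeff_T_boxplus p q (le_trans hi hk)]
  have R : PowerSeries.coeff k (T n (sym n p) * T n (sym n q))
      = PowerSeries.coeff k ((T n p * rescale (-1) (T n p)) *
          (T n q * rescale (-1) (T n q))) := by
    apply coeff_mul_congr
    · intro i hi; exact coeff_T_sym p (le_trans hi hk)
    · intro i hi; exact coeff_T_sym q (le_trans hi hk)
  have hm : rescale (-1 : ℂ) (T n p * T n q) = rescale (-1) (T n p) * rescale (-1) (T n q) :=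
    map_mul (rescale (-1 : ℂ)) _ _
  rw [L, R, hm, mul_mul_mul_comm]

lemma part3 (n : ℕ) (α : ℂ) (p : Polynomial ℂ) :
    sym n (dil n α p) = dil n α (sym n p) := by
  rw [sym_eq, sym_eq, dil_ofE]
  apply ofE_congr
  intro k hk
  rw [T_dil, rescale_rescale]
  have h1 : α * (-1) = (-1) * α := by ring
  rw [h1, ← rescale_rescale, ← map_mul, coeff_rescale]
  ring

lemma ffa_nat (n : ℕ) : ∀ k ≤ n, ffa (n : ℂ) k = (n.descFactorial k : ℂ) := by
  intro k
  induction k with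
  | zero => intro _; simp [ffa]
  | succ k ih =>
    intro h
    have hk : k ≤ n := by omega
    rw [ffa, Finset.prod_range_succ, ← ffa, ih hk, Nat.descFactorial_succ,
      Nat.cast_mul, Nat.cast_sub hk]
    ring

lemma coeff_T_c {n i : ℕ} (α : ℂ) (h : i ≤ n) :
    PowerSeries.coeff i (T n ((Polynomial.X - Polynomial.C α) ^ n)) =
      PowerSeries.coeff i (rescale α (PowerSeries.exp ℂ)) := by
  rw [coeff_T, if_pos h, coeff_rescale, PowerSeries.coeff_exp]
  have hc : eC n i ((Polynomial.X - Polynomial.C α) ^ n) = (n.choose i : ℂ) * α ^ i := by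
    rw [eC]
    have hXC : (Polynomial.X - Polynomial.C α) = Polynomial.X + Polynomial.C (-α) := by
      rw [Polynomial.C_neg]; ring
    rw [hXC, Polynomial.coeff_X_add_C_pow]
    have h1 : n - (n - i) = i := by omega
    rw [h1, Nat.choose_symm h]
    have h2 : (-1 : ℂ) ^ i * (-α) ^ i = α ^ i := by
      rw [← mul_pow]; norm_num
    calc (-1 : ℂ) ^ i * ((-α) ^ i * (n.choose i : ℂ))
        = ((-1 : ℂ) ^ i * (-α) ^ i) * (n.choose i : ℂ) := by ring
      _ = (n.choose i : ℂ) * α ^ i := by rw [h2]; ring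
  rw [hc, ffa_nat n i h, Nat.descFactorial_eq_factorial_mul_choose, Nat.cast_mul]
  have hch : ((n.choose i : ℕ) : ℂ) ≠ 0 := by
    exact_mod_cast (Nat.choose_pos h).ne'
  have hfac : ((Nat.factorial i : ℕ) : ℂ) ≠ 0 := by
    exact_mod_cast (Nat.factorial_pos i).ne'
  rw [map_div₀, map_one, map_natCast]
  field_simp

lemma c_cancel {n i : ℕ} (α : ℂ) (h : i ≤ n) :
    PowerSeries.coeff i (T n ((Polynomial.X - Polynomial.C α) ^ n) *
      rescale (-1) (T n ((Polynomial.X - Polynomial.C α) ^ n))) =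
    PowerSeries.coeff i (1 : PowerSeries ℂ) := by
  have key : PowerSeries.coeff i (T n ((Polynomial.X - Polynomial.C α) ^ n) *
      rescale (-1) (T n ((Polynomial.X - Polynomial.C α) ^ n))) =
      PowerSeries.coeff i (rescale α (PowerSeries.exp ℂ) *
        rescale (-α) (PowerSeries.exp ℂ)) := by
    apply coeff_mul_congr
    · intro j hj; exact coeff_T_c α (le_trans hj h)
    · intro j hj
      rw [coeff_rescale, coeff_T_c α (le_trans hj h), coeff_rescale, coeff_rescale, neg_pow]
      ring
  rw [key, PowerSeries.exp_mul_exp_eq_exp_add, add_neg_cancel, rescale_zero]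
  simp

lemma part4 (n : ℕ) (α : ℂ) (p : Polynomial ℂ) :
    sym n (boxplus n p ((Polynomial.X - Polynomial.C α) ^ n)) = sym n p := by
  set c := (Polynomial.X - Polynomial.C α) ^ n with hc
  rw [sym_eq, sym_eq]
  apply ofE_congr
  intro k hk
  congr 1
  have L : PowerSeries.coeff k (T n (boxplus n p c) * rescale (-1) (T n (boxplus n p c)))
      = PowerSeries.coeff k ((T n p * T n c) * rescale (-1) (T n p * T n c)) := by
    apply coeff_mul_congr
    · intro i hi; exact coeff_T_boxplus p c (le_trans hi hk)
    · intro i hi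
      rw [coeff_rescale, coeff_rescale, coeff_T_boxplus p c (le_trans hi hk)]
  have hm : rescale (-1 : ℂ) (T n p * T n c) = rescale (-1) (T n p) * rescale (-1) (T n c) :=
    map_mul (rescale (-1 : ℂ)) _ _
  rw [L, hm, mul_mul_mul_comm]
  have R : PowerSeries.coeff k ((T n p * rescale (-1) (T n p)) *
        (T n c * rescale (-1) (T n c)))
      = PowerSeries.coeff k ((T n p * rescale (-1) (T n p)) * 1) := by
    apply coeff_mul_congr
    · intro i _; rfl
    · intro i hi; exact c_cancel α (le_trans hi hk)
  rw [R, mul_one]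


end Aux

/-- basic properties of the symmetrization. -/
theorem stmt3 (n : ℕ) (hn : 1 ≤ n) (p q : Polynomial ℂ)
    (hpm : p.Monic) (hpd : p.natDegree = n)
    (hqm : q.Monic) (hqd : q.natDegree = n) (α : ℂ) :
    (∀ k ≤ n, Odd k → eC n k (sym n p) = 0) ∧
    sym n (boxplus n p q) = boxplus n (sym n p) (sym n q) ∧
    (α ≠ 0 → sym n (dil n α p) = dil n α (sym n p)) ∧
    sym n (boxplus n p ((Polynomial.X - Polynomial.C α) ^ n)) = sym n p := by
  refine ⟨?_, ?_, fun _ => ?_, ?_⟩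
  · intro k hk hodd
    rw [eC_sym p hk, coeff_mul_rescale_neg_one_odd _ hodd, mul_zero]
  · exact part2 n p q
  · exact part3 n α p
  · exact part4 n α p


end FFP
end
end

section
/- Let c ∈ ℝ, c ≠ 0, let i, j ≥ 0 and m, l ≥ 1 be integers, and let a = (a_1,…,a_i), b = (b_1,…,b_j) be tuples of reals with m·a_s ∉ {0,1,…,m−1} for each s. Define the polynomial p(x) = Σ_{k=0}^{m} [∏_t (−m b_t)^{(k)} / ∏_s (−m a_s)^{(k)}] · (c^k / k!) · (d/dx)^{lk} x^{lm}, where (u)^{(k)} = u(u+1)⋯(u+k−1) is the rising factorial and (d/dx)^{lk} x^{lm} = (lm)_{lk} x^{lm−lk} with (lm)_{lk} the falling factorial. Then p(x) = ((−1)^{i+j+1} l^l c)^m · H_m[b, 1−1/(lm), 1−2/(lm), …, 1−(l−1)/(lm); a] evaluated at ((−1)^{i+j+1}/(l^l c)) x^l. -/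
open Polynomial Finset

noncomputable section

namespace FFP

lemma rfa_neg (x : ℂ) (k : ℕ) : rfa (-x) k = (-1) ^ k * ffa x k := by
  unfold rfa ffa
  calc (∏ i ∈ Finset.range k, (-x + i)) = ∏ i ∈ Finset.range k, (-1) * (x - i) :=
        Finset.prod_congr rfl (by intros; ring)
    _ = (-1) ^ k * ∏ i ∈ Finset.range k, (x - i) := by
        rw [Finset.prod_mul_distrib, Finset.prod_const, Finset.card_range]

lemma ffa_succ (x : ℂ) (k : ℕ) : ffa x (k + 1) = ffa x k * (x - k) :=
  Finset.prod_range_succ _ _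

lemma ffa_nat_s8 (m k : ℕ) (h : k ≤ m) :
    ffa (m : ℂ) k = (k.factorial : ℂ) * (m.choose k : ℂ) := by
  induction k with
  | zero => simp [ffa]
  | succ k ih =>
    have hk : k < m := h
    rw [ffa_succ, ih hk.le]
    have h1 : ((m.choose (k+1)) * (k+1) : ℕ) = (m.choose k) * (m - k) :=
      Nat.choose_succ_right_eq m k
    have h2 : ((m.choose (k+1) : ℂ)) * (k+1) = (m.choose k : ℂ) * ((m : ℂ) - k) := by
      have := congrArg (Nat.cast : ℕ → ℂ) h1
      push_cast [Nat.cast_sub hk.le] at this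
      exact this
    rw [Nat.factorial_succ]
    push_cast
    linear_combination (-(k.factorial : ℂ)) * h2

lemma ffa_add (x : ℂ) (a b : ℕ) :
    ffa x (a + b) = ffa x a * ∏ r ∈ Finset.range b, (x - (a + r : ℕ)) := by
  unfold ffa
  rw [Finset.prod_range_add]

lemma ffa_mul (l m k : ℕ) (hl : 0 < l) :
    ffa ((l * m : ℕ) : ℂ) (l * k) =
      (l : ℂ) ^ (l * k) * ∏ r ∈ Finset.range l, ffa ((m : ℂ) - r / l) k := by
  have hl0 : (l : ℂ) ≠ 0 := Nat.cast_ne_zero.mpr hl.ne'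
  induction k with
  | zero => simp [ffa]
  | succ k ih =>
    rw [Nat.mul_succ, ffa_add, ih]
    have key : (∏ r ∈ Finset.range l, (((l * m : ℕ) : ℂ) - ((l * k + r : ℕ) : ℂ))) =
        (l : ℂ) ^ l * ∏ r ∈ Finset.range l, ((m : ℂ) - r / l - k) := by
      rw [← Finset.card_range l, ← Finset.prod_const, Finset.card_range,
        ← Finset.prod_mul_distrib]
      refine Finset.prod_congr rfl fun r _ => ?_
      push_cast
      field_simp
      ring
    rw [key]
    have h2 : ∏ r ∈ Finset.range l, ffa ((m : ℂ) - r / l) (k + 1) =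
        ∏ r ∈ Finset.range l, (ffa ((m : ℂ) - r / l) k * ((m : ℂ) - r / l - k)) :=
      Finset.prod_congr rfl fun r _ => ffa_succ _ _
    rw [h2, Finset.prod_mul_distrib, pow_add]
    ring


set_option maxHeartbeats 2000000 in
/-- hypergeometric differential operators applied to `x^(lm)` give
dilated hypergeometric polynomials in `x^l`. -/
theorem stmt8 (c : ℝ) (hc : c ≠ 0) (i j m l : ℕ) (hm : 1 ≤ m) (hl : 1 ≤ l)
    (a : Fin i → ℝ) (b : Fin j → ℝ)
    (ha : ∀ s, ∀ k < m, (m : ℝ) * a s ≠ k) :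
    (∑ k ∈ Finset.range (m + 1),
        Polynomial.C ((∏ t, rfa (-(m : ℂ) * (b t : ℂ)) k) /
            (∏ s, rfa (-(m : ℂ) * (a s : ℂ)) k) * (c : ℂ) ^ k / (k.factorial : ℂ) *
          ffa ((l * m : ℕ) : ℂ) (l * k)) * Polynomial.X ^ (l * m - l * k)) =
      Polynomial.C (((-1 : ℂ) ^ (i + j + 1) * (l : ℂ) ^ l * (c : ℂ)) ^ m) *
        (hyp m (Fin.append b
            (fun r : Fin (l - 1) => 1 - (((r : ℕ) + 1 : ℝ)) / ((l * m : ℕ) : ℝ))) a).comp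
          (Polynomial.C ((-1 : ℂ) ^ (i + j + 1) / ((l : ℂ) ^ l * (c : ℂ))) *
            Polynomial.X ^ l) := by
  have hm0 : (m : ℂ) ≠ 0 := Nat.cast_ne_zero.mpr (by omega)
  have hl0 : (l : ℂ) ≠ 0 := Nat.cast_ne_zero.mpr (by omega)
  have hc0 : (c : ℂ) ≠ 0 := Complex.ofReal_ne_zero.mpr hc
  have hlm0 : ((l * m : ℕ) : ℝ) ≠ 0 := Nat.cast_ne_zero.mpr (Nat.mul_ne_zero (by omega) (by omega))
  rw [hyp, ofE]
  simp only [Polynomial.sum_comp, Polynomial.mul_comp, Polynomial.C_comp,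
    Polynomial.pow_comp, Polynomial.X_comp, Finset.mul_sum]
  refine Finset.sum_congr rfl fun k hk => ?_
  rw [Finset.mem_range, Nat.lt_succ_iff] at hk
  have hexp : l * m - l * k = l * (m - k) := by
    rw [Nat.mul_sub]
  rw [hexp, mul_pow (Polynomial.C _) (Polynomial.X ^ l) (m - k), ← Polynomial.C_pow,
    ← pow_mul]
  rw [show ∀ u v w : ℂ, Polynomial.C u * (Polynomial.C v *
        (Polynomial.C w * Polynomial.X ^ (l * (m - k)))) =
      Polynomial.C (u * v * w) * Polynomial.X ^ (l * (m - k)) from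
    fun u v w => by rw [← mul_assoc, ← mul_assoc, ← Polynomial.C_mul, ← Polynomial.C_mul]]
  congr 1
  rw [Polynomial.C_inj]
  have hrfa : ∀ x : ℝ, rfa (-(m:ℂ) * (x:ℂ)) k = (-1)^k * ffa ((m:ℂ) * x) k := fun x => by
    rw [neg_mul]; exact rfa_neg _ _
  simp only [hrfa, Finset.prod_mul_distrib, Finset.prod_const, Finset.card_univ,
    Fintype.card_fin]
  rw [Fin.prod_univ_add]
  simp only [Fin.append_left, Fin.append_right]
  rw [Fin.prod_univ_eq_prod_range (fun q : ℕ =>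
    ffa ((m:ℂ) * ((1 - ((q:ℝ)+1)/((l*m:ℕ):ℝ) : ℝ) : ℂ)) k) (l-1)]
  have harg : ∀ q : ℕ, (m:ℂ) * ((1 - ((q:ℝ)+1)/((l*m:ℕ):ℝ) : ℝ) : ℂ) =
      (m:ℂ) - ((q:ℂ)+1)/l := by
    intro q
    push_cast
    field_simp
  simp only [harg]
  rw [ffa_mul l m k (by omega)]
  have hsplit : (∏ r ∈ Finset.range l, ffa ((m:ℂ) - r/l) k) =
      ffa (m:ℂ) k * ∏ q ∈ Finset.range (l-1), ffa ((m:ℂ) - ((q:ℂ)+1)/l) k := by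
    obtain ⟨l', rfl⟩ : ∃ l', l = l' + 1 := ⟨l - 1, by omega⟩
    rw [Finset.prod_range_succ']
    simp only [Nat.add_sub_cancel]
    push_cast
    norm_num [mul_comm]
  rw [hsplit, ffa_nat_s8 m k hk]
  have hden : (l:ℂ)^l * c ≠ 0 := mul_ne_zero (pow_ne_zero _ hl0) hc0
  have hββ : ((-1:ℂ))^(i+j+1) * ((-1:ℂ))^(i+j+1) = 1 := by
    rw [← pow_add]; exact Even.neg_one_pow ⟨i+j+1, rfl⟩
  have hβα : ((-1:ℂ)^(i+j+1) * (l:ℂ)^l * c) * ((-1:ℂ)^(i+j+1) / ((l:ℂ)^l * c)) = 1 := by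
    calc ((-1:ℂ)^(i+j+1) * (l:ℂ)^l * c) * ((-1:ℂ)^(i+j+1) / ((l:ℂ)^l * c))
        = ((-1:ℂ)^(i+j+1) * (-1:ℂ)^(i+j+1)) * (((l:ℂ)^l * c) * ((l:ℂ)^l * c)⁻¹) := by ring
      _ = 1 := by rw [hββ, mul_inv_cancel₀ hden, one_mul]
  have h1' : ∀ β α : ℂ, β * α = 1 → β^m * α^(m-k) = β^k := by
    intro β α h
    calc β^m * α^(m-k) = β^(k+(m-k)) * α^(m-k) := by rw [Nat.add_sub_cancel' hk]
      _ = β^k * (β*α)^(m-k) := by rw [pow_add, mul_pow]; ring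
      _ = β^k := by rw [h, one_pow, mul_one]
  have h1 : ((-1:ℂ)^(i+j+1) * (l:ℂ)^l * c)^m * ((-1:ℂ)^(i+j+1) / ((l:ℂ)^l * c))^(m-k)
      = ((-1:ℂ)^(i+j+1) * (l:ℂ)^l * c)^k := h1' _ _ hβα
  conv_rhs => rw [mul_right_comm, h1]
  have hA : (∏ s, ffa ((m:ℂ) * (a s)) k) ≠ 0 := by
    apply Finset.prod_ne_zero_iff.mpr
    intro s _
    unfold ffa
    apply Finset.prod_ne_zero_iff.mpr
    intro q hq
    rw [Finset.mem_range] at hq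
    have hql : q < m := lt_of_lt_of_le hq hk
    intro h0
    apply ha s q hql
    have h2 : (m:ℂ) * (a s) = (q:ℂ) := by
      have := sub_eq_zero.mp h0
      exact this
    exact_mod_cast h2
  have hfac : (k.factorial : ℂ) ≠ 0 := Nat.cast_ne_zero.mpr k.factorial_ne_zero
  simp only [mul_pow, ← pow_mul]
  rw [show (i+j+1)*k = k*i + (k*j + k) by ring, pow_add, pow_add]
  rcases Nat.even_or_odd (k*i) with hi2 | hi2 <;>
  rcases Nat.even_or_odd (k*j) with hj2 | hj2 <;>
  rcases Nat.even_or_odd k with hk2 | hk2 <;>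
    simp only [hi2.neg_one_pow, hj2.neg_one_pow, hk2.neg_one_pow, one_pow] <;>
    field_simp <;> ring


end FFP
end
end
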